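/- The Frobenius-norm projection of a symmetric block-circulant matrix onto the cone of positive semidefinite matrices is again block-circulant. Concretely, if C = F* diag{C(ζ^0),...,C(ζ^{N-1})} F, then the PSD projection of C equals F* diag{P^+(C(ζ^0)),...,P^+(C(ζ^{N-1}))} F, where P^+ denotes the projection of a Hermitian matrix onto the PSD cone obtained by truncating negative eigenvalues to zero. -/

import Mathlib

open Matrix Complex Finset
open scoped ComplexOrder

noncomputable section

/-- N-th root of unity ζ = e^{2πi/N}. -/
def zetaN (N : ℕ) : ℂ := Complex.exp (2 * Real.pi * Complex.I / N)

/-- Block-circulant matrix with m×m blocks: the (j,k) block is C_{(j-k) mod N}. -/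
def blockCirc (N m : ℕ) (C : Fin N → Matrix (Fin m) (Fin m) ℂ) :
    Matrix (Fin N × Fin m) (Fin N × Fin m) ℂ :=
  fun p q => C (p.1 - q.1) p.2 q.2

/-- Symbol Φ of the block-circulant matrix evaluated at ζ^j:
Φ(ζ^j) = Σ_{k=0}^{N-1} C_k ζ^{-jk}. -/
def symbolAt (N m : ℕ) (C : Fin N → Matrix (Fin m) (Fin m) ℂ) (j : Fin N) :
    Matrix (Fin m) (Fin m) ℂ :=
  ∑ k : Fin N, (zetaN N ^ (-((j.val * k.val : ℕ) : ℤ))) • C k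

/-- Fourier block-matrix, (j,k) block equal to (1/√N) ζ^{-jk} I_m. -/
def fourierBlk (N m : ℕ) : Matrix (Fin N × Fin m) (Fin N × Fin m) ℂ :=
  fun p q =>
    if p.2 = q.2 then (1 / (Real.sqrt N : ℂ)) * zetaN N ^ (-((p.1.val * q.1.val : ℕ) : ℤ))
    else 0

/-- Block-diagonal matrix with diagonal blocks S_0, ..., S_{N-1}. -/
def blockDiag (N m : ℕ) (S : Fin N → Matrix (Fin m) (Fin m) ℂ) :
    Matrix (Fin N × Fin m) (Fin N × Fin m) ℂ :=
  fun p q => if p.1 = q.1 then S p.1 p.2 q.2 else 0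


/-- A matrix is block-circulant if its (j,k) block depends only on (j-k) mod N. -/
def IsBlockCircMat (N m : ℕ) (A : Matrix (Fin N × Fin m) (Fin N × Fin m) ℂ) : Prop :=
  ∃ C : Fin N → Matrix (Fin m) (Fin m) ℂ, A = blockCirc N m C

/-- Frobenius norm of a complex matrix. -/
def frobNorm {α : Type*} [Fintype α] (M : Matrix α α ℂ) : ℝ :=
  Real.sqrt (∑ i, ∑ j, ‖M i j‖ ^ 2)

/-! Conjugation by the unitary `U = diag(V_k) · F` turns `C` and `P` into the real diagonal
matrices `diag(λ)` and `diag(λ⁺)`. Hence `P` and `D = P - C` are both positive semidefinite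
with `P D = 0`, and for every PSD `X`
`‖X - C‖² = ‖X - P‖² + ‖D‖² + 2 Re tr(X D)`, where `tr(X D) = tr(B X Bᴴ) ≥ 0` for `D = Bᴴ B`;
so `P` is the unique nearest PSD matrix to `C`. It is block-circulant, as is every
`Fᴴ diag(T_k) F`: its `(a, b)` block is `N⁻¹ ∑ⱼ ζ^((a - b) j) T_j`, which depends only on
`a - b mod N`. -/

section NearestPSD

variable {ι : Type*} [Fintype ι]

def IsPSDProjection (C P : Matrix ι ι ℂ) : Prop :=
  P.PosSemidef ∧
    (∀ X : Matrix ι ι ℂ, X.PosSemidef → frobNorm (P - C) ≤ frobNorm (X - C)) ∧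
    (∀ X : Matrix ι ι ℂ, X.PosSemidef → frobNorm (X - C) = frobNorm (P - C) → X = P)

lemma frobNorm_nonneg (M : Matrix ι ι ℂ) : 0 ≤ frobNorm M := Real.sqrt_nonneg _

lemma frobNorm_sq (M : Matrix ι ι ℂ) : frobNorm M ^ 2 = (Mᴴ * M).trace.re := by
  rw [frobNorm, Real.sq_sqrt (by positivity), trace, re_sum, Finset.sum_comm]
  refine Finset.sum_congr rfl fun j _ => ?_
  rw [diag_apply, mul_apply, re_sum]
  refine Finset.sum_congr rfl fun i _ => ?_
  rw [conjTranspose_apply, RCLike.star_def, ← normSq_eq_norm_sq, ← normSq_eq_conj_mul_self]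
  rfl

lemma frobNorm_eq_zero_iff {M : Matrix ι ι ℂ} : frobNorm M = 0 ↔ M = 0 := by
  have htrace : 0 ≤ (Mᴴ * M).trace := (posSemidef_conjTranspose_mul_self M).trace_nonneg
  rw [← trace_conjTranspose_mul_self_eq_zero_iff, ← sq_eq_zero_iff, frobNorm_sq]
  exact ⟨fun h => Complex.ext h (Complex.le_def.mp htrace).2.symm, fun h => by rw [h, zero_re]⟩

variable [DecidableEq ι]

lemma re_trace_mul_nonneg {X D : Matrix ι ι ℂ} (hX : X.PosSemidef) (hD : D.PosSemidef) :
    0 ≤ (X * D).trace.re := by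
  obtain ⟨B, rfl⟩ : ∃ B : Matrix ι ι ℂ, D = star B * B := by
    open scoped MatrixOrder Matrix.Norms.L2Operator in
    exact CStarAlgebra.nonneg_iff_eq_star_mul_self.mp hD.nonneg
  rw [star_eq_conjTranspose, ← Matrix.mul_assoc, trace_mul_cycle]
  exact (Complex.le_def.mp (hX.mul_mul_conjTranspose_same B).trace_nonneg).1

lemma frobNorm_sub_sub_sq {X P D : Matrix ι ι ℂ} (hX : X.IsHermitian) (hP : P.IsHermitian)
    (hD : D.IsHermitian) (hPD : P * D = 0) :
    frobNorm (X - (P - D)) ^ 2 =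
      frobNorm (X - P) ^ 2 + frobNorm D ^ 2 + 2 * (X * D).trace.re := by
  have hDP : D * P = 0 := by
    rw [← hD.eq, ← hP.eq, ← conjTranspose_mul, hPD, conjTranspose_zero]
  have hXP : (X - P)ᴴ = X - P := (hX.sub hP).eq
  have hXPD : (X - P) * D = X * D := by rw [sub_mul, hPD, sub_zero]
  have hDXP : D * (X - P) = D * X := by rw [mul_sub, hDP, sub_zero]
  rw [show X - (P - D) = (X - P) + D by abel, frobNorm_sq, frobNorm_sq, frobNorm_sq,
    conjTranspose_add, hXP, hD.eq, add_mul, mul_add, mul_add, hXPD, hDXP,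
    trace_add, trace_add, trace_add, trace_mul_comm D X]
  simp only [add_re]
  ring

theorem isPSDProjection_sub {P D : Matrix ι ι ℂ} (hP : P.PosSemidef) (hD : D.PosSemidef)
    (hPD : P * D = 0) : IsPSDProjection (P - D) P := by
  have hPC : P - (P - D) = D := sub_sub_cancel P D
  have hsq : ∀ X : Matrix ι ι ℂ, X.PosSemidef →
      frobNorm (X - P) ^ 2 + frobNorm D ^ 2 ≤ frobNorm (X - (P - D)) ^ 2 := fun X hX => by
    rw [frobNorm_sub_sub_sq hX.1 hP.1 hD.1 hPD]
    linarith [re_trace_mul_nonneg hX hD]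
  refine ⟨hP, fun X hX => ?_, fun X hX hEq => ?_⟩
  · rw [hPC, ← pow_le_pow_iff_left₀ (frobNorm_nonneg _) (frobNorm_nonneg _) two_ne_zero]
    linarith [hsq X hX, sq_nonneg (frobNorm (X - P))]
  · rw [hPC] at hEq
    have h0 : frobNorm (X - P) ^ 2 = 0 :=
      le_antisymm (by linarith [hEq ▸ hsq X hX]) (sq_nonneg _)
    exact sub_eq_zero.mp (frobNorm_eq_zero_iff.mp (pow_eq_zero_iff two_ne_zero |>.mp h0))

end NearestPSD

section UnitaryConj

variable {ι : Type*} [Fintype ι] [DecidableEq ι] {U : Matrix ι ι ℂ}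

lemma conj_diagonal_mul_conj_diagonal (hU : U * Uᴴ = 1) (d e : ι → ℂ) :
    (Uᴴ * diagonal d * U) * (Uᴴ * diagonal e * U) = Uᴴ * diagonal (fun i => d i * e i) * U := by
  simp only [Matrix.mul_assoc]
  rw [← Matrix.mul_assoc U, hU, Matrix.one_mul, ← Matrix.mul_assoc (diagonal d),
    diagonal_mul_diagonal]

lemma posSemidef_conj_diagonal (d : ι → ℝ) (hd : ∀ i, 0 ≤ d i) :
    (Uᴴ * diagonal (fun i => (d i : ℂ)) * U).PosSemidef :=
  (posSemidef_diagonal_iff.mpr fun i => by exact_mod_cast hd i).conjTranspose_mul_mul_same U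

theorem isPSDProjection_conj_diagonal (hU : U * Uᴴ = 1) (d : ι → ℝ) :
    IsPSDProjection (Uᴴ * diagonal (fun i => (d i : ℂ)) * U)
      (Uᴴ * diagonal (fun i => ((max (d i) 0 : ℝ) : ℂ)) * U) := by
  have hsplit : Uᴴ * diagonal (fun i => (d i : ℂ)) * U =
      Uᴴ * diagonal (fun i => ((max (d i) 0 : ℝ) : ℂ)) * U -
        Uᴴ * diagonal (fun i => ((max (d i) 0 - d i : ℝ) : ℂ)) * U := by
    rw [← sub_mul, ← mul_sub, diagonal_sub]
    congr 3
    ext i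
    push_cast
    ring
  rw [hsplit]
  refine isPSDProjection_sub (posSemidef_conj_diagonal _ fun i => le_max_right _ _)
    (posSemidef_conj_diagonal _ fun i => sub_nonneg.mpr (le_max_left _ _)) ?_
  have htrunc : ∀ x : ℝ, max x 0 * (max x 0 - x) = 0 := fun x => by
    rcases le_total x 0 with h | h <;> simp [h]
  simp_rw [conj_diagonal_mul_conj_diagonal hU, ← ofReal_mul, htrunc, ofReal_zero, diagonal_zero,
    Matrix.mul_zero, Matrix.zero_mul]

end UnitaryConj

section BlockDiag

variable {N m : ℕ}

lemma blockDiag_eq_submatrix_blockDiagonal (S : Fin N → Matrix (Fin m) (Fin m) ℂ) :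
    blockDiag N m S =
      (blockDiagonal S).submatrix (Equiv.prodComm _ _) (Equiv.prodComm _ _) := by
  ext ⟨a, i⟩ ⟨b, l⟩
  simp [_root_.blockDiag, blockDiagonal_apply]

lemma blockDiag_mul (S T : Fin N → Matrix (Fin m) (Fin m) ℂ) :
    blockDiag N m (fun k => S k * T k) = blockDiag N m S * blockDiag N m T := by
  simp only [blockDiag_eq_submatrix_blockDiagonal, submatrix_mul_equiv, blockDiagonal_mul]

lemma blockDiag_conjTranspose (S : Fin N → Matrix (Fin m) (Fin m) ℂ) :
    (blockDiag N m S)ᴴ = blockDiag N m (fun k => (S k)ᴴ) := by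
  rw [blockDiag_eq_submatrix_blockDiagonal, blockDiag_eq_submatrix_blockDiagonal,
    conjTranspose_submatrix, blockDiagonal_conjTranspose]

lemma blockDiag_diagonal (d : Fin N → Fin m → ℂ) :
    blockDiag N m (fun k => diagonal (d k)) = diagonal (fun p => d p.1 p.2) := by
  rw [blockDiag_eq_submatrix_blockDiagonal, blockDiagonal_diagonal, submatrix_diagonal_equiv]
  rfl

lemma blockDiag_one : blockDiag N m (fun _ => 1) = 1 := by
  simpa using blockDiag_diagonal (N := N) (m := m) (fun _ _ => 1)

end BlockDiag

section Fourier

variable {N m : ℕ}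

lemma isPrimitiveRoot_zetaN (hN : 0 < N) : IsPrimitiveRoot (zetaN N) N :=
  Complex.isPrimitiveRoot_exp N hN.ne'

lemma zetaN_ne_zero : zetaN N ≠ 0 := Complex.exp_ne_zero _

lemma star_zetaN : star (zetaN N) = (zetaN N)⁻¹ := by
  rw [zetaN, show star (exp _) = starRingEnd ℂ (exp _) from rfl, ← exp_conj, ← exp_neg]
  congr 1
  simp [div_eq_mul_inv, map_ofNat]

lemma zetaN_zpow_eq_of_modEq (hN : 0 < N) {x y : ℤ} (h : x ≡ y [ZMOD N]) :
    zetaN N ^ x = zetaN N ^ y := by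
  rw [← div_eq_one_iff_eq (zpow_ne_zero _ zetaN_ne_zero), ← zpow_sub₀ zetaN_ne_zero,
    (isPrimitiveRoot_zetaN hN).zpow_eq_one_iff_dvd]
  exact h.symm.dvd

lemma Fin.intCast_val_sub_modEq (a b : Fin N) :
    (((a - b : Fin N) : ℕ) : ℤ) ≡ a - b [ZMOD N] := by
  rw [Fin.val_sub, Int.natCast_mod, Nat.cast_add, Nat.cast_sub b.isLt.le]
  exact (Int.mod_modEq _ _).trans (Int.modEq_iff_dvd.mpr ⟨-1, by ring⟩)

lemma sum_zetaN_zpow_sub_mul (hN : 0 < N) (a b : Fin N) :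
    ∑ j : Fin N, zetaN N ^ (((a : ℤ) - b) * j) = if a = b then (N : ℂ) else 0 := by
  split_ifs with hab
  · simp [hab]
  set w := zetaN N ^ ((a : ℤ) - b)
  have hw : w ≠ 1 := by
    rw [Ne, (isPrimitiveRoot_zetaN hN).zpow_eq_one_iff_dvd]
    intro hdvd
    have hlt : |(a : ℤ) - b| < N := by
      rw [abs_sub_lt_iff]; omega
    exact hab (Fin.ext (by have := Int.eq_zero_of_abs_lt_dvd hdvd hlt; omega))
  have hwN : w ^ N = 1 := by
    rw [← zpow_natCast, ← _root_.zpow_mul, mul_comm, _root_.zpow_mul, zpow_natCast,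
      (isPrimitiveRoot_zetaN hN).pow_eq_one, _root_.one_zpow]
  simp_rw [_root_.zpow_mul, zpow_natCast]
  rw [Fin.sum_univ_eq_sum_range (w ^ ·), geom_sum_eq hw, hwN, sub_self, zero_div]


lemma fourierBlk_conj_blockDiag_apply (T : Fin N → Matrix (Fin m) (Fin m) ℂ)
    (a b : Fin N) (i l : Fin m) :
    ((fourierBlk N m)ᴴ * blockDiag N m T * fourierBlk N m) (a, i) (b, l) =
      1 / N * ∑ j : Fin N, zetaN N ^ (((a : ℤ) - b) * j) * T j i l := by
  have hsqrt : (1 / (Real.sqrt N : ℂ)) * (1 / (Real.sqrt N : ℂ)) = 1 / N := by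
    rw [one_div_mul_one_div, ← ofReal_mul, Real.mul_self_sqrt (Nat.cast_nonneg N), ofReal_natCast]
  simp only [mul_apply, Fintype.sum_prod_type, conjTranspose_apply, fourierBlk, _root_.blockDiag,
    apply_ite star, star_zero, star_mul', star_zpow₀, star_zetaN]
  simp only [ite_mul, mul_ite, zero_mul, mul_zero, Finset.sum_ite_irrel, Finset.sum_const_zero,
    Finset.sum_ite_eq', Finset.mem_univ, if_true, Finset.mul_sum, _root_.inv_zpow', neg_neg]
  refine Finset.sum_congr rfl fun j _ => ?_
  have hstar : star (1 / (Real.sqrt N : ℂ)) = 1 / (Real.sqrt N : ℂ) := by simp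
  rw [hstar, ← hsqrt,
    show ((a : ℤ) - b) * j = ((j * a : ℕ) : ℤ) + -((j * b : ℕ) : ℤ) by push_cast; ring,
    zpow_add₀ zetaN_ne_zero]
  ring


lemma conjTranspose_fourierBlk_mul_self (hN : 0 < N) :
    (fourierBlk N m)ᴴ * fourierBlk N m = 1 := by
  ext ⟨a, i⟩ ⟨b, l⟩
  have h := fourierBlk_conj_blockDiag_apply (fun _ => (1 : Matrix (Fin m) (Fin m) ℂ)) a b i l
  rw [blockDiag_one, Matrix.mul_one] at h
  simp only [h, ← Finset.sum_mul, sum_zetaN_zpow_sub_mul hN, one_apply, Prod.mk.injEq]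
  have hN' : (N : ℂ) ≠ 0 := by exact_mod_cast hN.ne'
  split_ifs <;> simp_all

lemma fourierBlk_mul_conjTranspose (hN : 0 < N) : fourierBlk N m * (fourierBlk N m)ᴴ = 1 :=
  mul_eq_one_comm.mp (conjTranspose_fourierBlk_mul_self hN)

lemma isBlockCircMat_fourierBlk_conj_blockDiag (hN : 0 < N)
    (T : Fin N → Matrix (Fin m) (Fin m) ℂ) :
    IsBlockCircMat N m ((fourierBlk N m)ᴴ * blockDiag N m T * fourierBlk N m) := by
  refine ⟨fun c i l => 1 / N * ∑ j : Fin N, zetaN N ^ ((c : ℤ) * j) * T j i l, ?_⟩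
  ext ⟨a, i⟩ ⟨b, l⟩
  rw [fourierBlk_conj_blockDiag_apply]
  simp only [blockCirc]
  congr 1
  refine Finset.sum_congr rfl fun j _ => ?_
  rw [zetaN_zpow_eq_of_modEq hN ((Fin.intCast_val_sub_modEq a b).mul_right _)]

lemma fourierBlk_conj_blockDiag_conj_diagonal (V : Fin N → Matrix (Fin m) (Fin m) ℂ)
    (d : Fin N → Fin m → ℂ) :
    (fourierBlk N m)ᴴ * blockDiag N m (fun k => (V k)ᴴ * diagonal (d k) * V k) *
        fourierBlk N m =
      (blockDiag N m V * fourierBlk N m)ᴴ * diagonal (fun p => d p.1 p.2) *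
        (blockDiag N m V * fourierBlk N m) := by
  simp only [blockDiag_mul, ← blockDiag_conjTranspose, blockDiag_diagonal, conjTranspose_mul,
    Matrix.mul_assoc]

end Fourier

theorem psd_projection_of_blockCirc_is_blockCirc_general
    (N m : ℕ) (hN : 0 < N)
    (S V : Fin N → Matrix (Fin m) (Fin m) ℂ) (lam : Fin N → Fin m → ℝ)
    (hV₁ : ∀ k, V k * (V k)ᴴ = 1)
    (hS : ∀ k, S k = (V k)ᴴ * Matrix.diagonal (fun i => ((lam k i : ℝ) : ℂ)) * V k)
    (C P : Matrix (Fin N × Fin m) (Fin N × Fin m) ℂ)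
    (hC : C = (fourierBlk N m)ᴴ * blockDiag N m S * fourierBlk N m)
    (hP : P = (fourierBlk N m)ᴴ *
      blockDiag N m
        (fun k => (V k)ᴴ * Matrix.diagonal (fun i => ((max (lam k i) 0 : ℝ) : ℂ)) * V k) *
      fourierBlk N m) :
    IsBlockCircMat N m P ∧ P.PosSemidef ∧
    (∀ X : Matrix (Fin N × Fin m) (Fin N × Fin m) ℂ, X.PosSemidef →
      frobNorm (P - C) ≤ frobNorm (X - C)) ∧
    (∀ X : Matrix (Fin N × Fin m) (Fin N × Fin m) ℂ, X.PosSemidef →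
      frobNorm (X - C) = frobNorm (P - C) → X = P) := by
  have hU : (blockDiag N m V * fourierBlk N m) * (blockDiag N m V * fourierBlk N m)ᴴ = 1 := by
    rw [conjTranspose_mul, Matrix.mul_assoc, ← Matrix.mul_assoc (fourierBlk N m),
      fourierBlk_mul_conjTranspose hN, Matrix.one_mul, blockDiag_conjTranspose, ← blockDiag_mul]
    simp only [hV₁, blockDiag_one]
  obtain rfl : S = _ := funext hS
  subst hC hP
  refine ⟨isBlockCircMat_fourierBlk_conj_blockDiag hN _, ?_⟩
  rw [fourierBlk_conj_blockDiag_conj_diagonal, fourierBlk_conj_blockDiag_conj_diagonal]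
  exact isPSDProjection_conj_diagonal hU (fun p => lam p.1 p.2)

/-- the Frobenius-norm projection onto the PSD cone of a symmetric
block-circulant matrix C = F* diag{C(ζ^0),...,C(ζ^{N-1})} F, where
C(ζ^k) = V_kᴴ diag(λ_k) V_k, is P = F* diag{P⁺(C(ζ^0)),...,P⁺(C(ζ^{N-1}))} F with
P⁺ truncating the negative eigenvalues to zero; moreover P is again
block-circulant. -/
theorem psd_projection_of_blockCirc_is_blockCirc
    (N m : ℕ) (hN : 0 < N)
    (S V : Fin N → Matrix (Fin m) (Fin m) ℂ) (lam : Fin N → Fin m → ℝ)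
    (hV₁ : ∀ k, V k * (V k)ᴴ = 1) (hV₂ : ∀ k, (V k)ᴴ * V k = 1)
    (hS : ∀ k, S k = (V k)ᴴ * Matrix.diagonal (fun i => ((lam k i : ℝ) : ℂ)) * V k)
    (C P : Matrix (Fin N × Fin m) (Fin N × Fin m) ℂ)
    (hC : C = (fourierBlk N m)ᴴ * blockDiag N m S * fourierBlk N m)
    (hsymm : Cᵀ = C)
    (hP : P = (fourierBlk N m)ᴴ *
      blockDiag N m
        (fun k => (V k)ᴴ * Matrix.diagonal (fun i => ((max (lam k i) 0 : ℝ) : ℂ)) * V k) *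
      fourierBlk N m) :
    IsBlockCircMat N m P ∧ P.PosSemidef ∧
    (∀ X : Matrix (Fin N × Fin m) (Fin N × Fin m) ℂ, X.PosSemidef →
      frobNorm (P - C) ≤ frobNorm (X - C)) ∧
    (∀ X : Matrix (Fin N × Fin m) (Fin N × Fin m) ℂ, X.PosSemidef →
      frobNorm (X - C) = frobNorm (P - C) → X = P) :=
  psd_projection_of_blockCirc_is_blockCirc_general N m hN S V lam hV₁ hS C P hC hP
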